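/- Let f : \mathbb{R}^+ \to \mathbb{R}^+ be amenable. Then f \circ d is an ultrametric for every ultrametric d if and only if (f(a), f(b), f(c)) is a strong triangle triplet whenever (a,b,c) is a strong triangle triplet. -/

import Mathlib

/-!
If `f` preserves ultrametrics, it is monotone on `[0, ∞)`: an isosceles three-point
ultrametric space with legs `b` and base `a ≤ b` forces `f a ≤ f b`. A monotone map preserves
strong triangle triplets, since `f (max b c) = max (f b) (f c)`. Conversely, the distances of
three points of an ultrametric space form a strong triangle triplet, and the strong triangle
inequality together with `d x x = 0` and symmetry already yields the remaining metric axioms,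
while amenability of `f` preserves `d x y = 0 ↔ x = y`.
-/

def IsMetric {X : Type*} (d : X → X → ℝ) : Prop :=
  (∀ x y, d x y = 0 ↔ x = y) ∧ (∀ x y, d x y = d y x) ∧
  (∀ x y z, d x y ≤ d x z + d z y)

def IsUltrametric {X : Type*} (d : X → X → ℝ) : Prop :=
  IsMetric d ∧ ∀ x y z, d x y ≤ max (d x z) (d z y)

def Amenable (f : ℝ → ℝ) : Prop := f 0 = 0 ∧ ∀ x > 0, f x > 0

def MetricPreserving (f : ℝ → ℝ) : Prop :=
  ∀ (X : Type) (d : X → X → ℝ), IsMetric d → IsMetric (fun x y => f (d x y))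

def UltrametricPreserving (f : ℝ → ℝ) : Prop :=
  ∀ (X : Type) (d : X → X → ℝ), IsUltrametric d → IsUltrametric (fun x y => f (d x y))

def TriangleTriplet (a b c : ℝ) : Prop := a ≤ b + c ∧ b ≤ a + c ∧ c ≤ a + b

def StrongTriangleTriplet (a b c : ℝ) : Prop :=
  a ≤ max b c ∧ b ≤ max a c ∧ c ≤ max a b

theorem IsMetric.nonneg {X : Type*} {d : X → X → ℝ} (hd : IsMetric d) (x y : X) :
    0 ≤ d x y := by
  have h := hd.2.2 x x y
  rw [(hd.1 x x).2 rfl, hd.2.1 y x] at h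
  linarith

theorem isUltrametric_of_le_max {X : Type*} {d : X → X → ℝ}
    (zero_iff : ∀ x y, d x y = 0 ↔ x = y) (symm : ∀ x y, d x y = d y x)
    (le_max : ∀ x y z, d x y ≤ max (d x z) (d z y)) :
    IsUltrametric d := by
  have nonneg : ∀ x y, 0 ≤ d x y := fun x y => by
    simpa [(zero_iff x x).2 rfl, symm y x] using le_max x x y
  refine ⟨⟨zero_iff, symm, fun x y z => ?_⟩, le_max⟩
  exact (le_max x y z).trans (max_le_add_of_nonneg (nonneg x z) (nonneg z y))

theorem IsUltrametric.strongTriangleTriplet {X : Type*} {d : X → X → ℝ} (hd : IsUltrametric d)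
    (x y z : X) : StrongTriangleTriplet (d x y) (d x z) (d z y) := by
  obtain ⟨⟨-, symm, -⟩, le_max⟩ := hd
  refine ⟨le_max x y z, ?_, ?_⟩
  · simpa only [symm y z] using le_max x z y
  · simpa only [symm z x, max_comm] using le_max z y x

theorem StrongTriangleTriplet.map_of_monotoneOn {f : ℝ → ℝ} {s : Set ℝ}
    (hf : MonotoneOn f s) {a b c : ℝ} (ha : a ∈ s) (hb : b ∈ s) (hc : c ∈ s)
    (h : StrongTriangleTriplet a b c) :
    StrongTriangleTriplet (f a) (f b) (f c) := by
  have map_le_max :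
      ∀ {x y z}, x ∈ s → y ∈ s → z ∈ s → x ≤ max y z → f x ≤ max (f y) (f z) :=
    fun hx hy hz hxyz => hf.map_max hy hz ▸ hf hx (max_rec' s hy hz) hxyz
  exact ⟨map_le_max ha hb hc h.1, map_le_max hb ha hc h.2.1, map_le_max hc ha hb h.2.2⟩

def isoscelesDist (a b : ℝ) (i j : Fin 3) : ℝ :=
  if i = j then 0 else if i ≠ 0 ∧ j ≠ 0 then a else b

theorem isUltrametric_isoscelesDist {a b : ℝ} (ha : 0 < a) (hab : a ≤ b) :
    IsUltrametric (isoscelesDist a b) := by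
  refine isUltrametric_of_le_max (fun x y => ?_) (fun x y => ?_) (fun x y z => ?_)
  · fin_cases x <;> fin_cases y <;> simp [isoscelesDist] <;> linarith
  · fin_cases x <;> fin_cases y <;> simp [isoscelesDist]
  · fin_cases x <;> fin_cases y <;> fin_cases z <;>
      simp [isoscelesDist] <;> linarith

theorem UltrametricPreserving.monotoneOn {f : ℝ → ℝ} (hf : UltrametricPreserving f) :
    MonotoneOn f (Set.Ici 0) := by
  intro a ha b _ hab
  rcases (Set.mem_Ici.1 ha).eq_or_lt with rfl | ha
  · rcases hab.eq_or_lt with rfl | hb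
    · rfl
    · have hfd := hf _ _ (isUltrametric_isoscelesDist hb le_rfl)
      have map_zero : f 0 = 0 := by simpa [isoscelesDist] using (hfd.1.1 0 0).2 rfl
      simpa [isoscelesDist, map_zero] using hfd.1.nonneg 0 1
  · simpa [isoscelesDist] using
      (hf _ _ (isUltrametric_isoscelesDist ha hab)).2 1 2 0

theorem Amenable.eq_zero_iff {f : ℝ → ℝ} (hf : Amenable f) {x : ℝ} (hx : 0 ≤ x) :
    f x = 0 ↔ x = 0 := by
  refine ⟨fun hfx => ?_, fun h => h ▸ hf.1⟩
  by_contra hne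
  exact (hf.2 x (hx.lt_of_ne' hne)).ne' hfx

theorem Amenable.ultrametricPreserving {f : ℝ → ℝ} (hf : Amenable f)
    (hSTT : ∀ a b c : ℝ, 0 ≤ a → 0 ≤ b → 0 ≤ c → StrongTriangleTriplet a b c →
      StrongTriangleTriplet (f a) (f b) (f c)) :
    UltrametricPreserving f := by
  intro X d hd
  refine isUltrametric_of_le_max (fun x y => ?_) (fun x y => by rw [hd.1.2.1]) (fun x y z => ?_)
  · rw [hf.eq_zero_iff (hd.1.nonneg x y)]
    exact hd.1.1 x y
  · exact (hSTT _ _ _ (hd.1.nonneg x y) (hd.1.nonneg x z) (hd.1.nonneg z y)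
      (hd.strongTriangleTriplet x y z)).1

theorem stmt7 (f : ℝ → ℝ) (hf : Amenable f) :
    UltrametricPreserving f ↔
      (∀ a b c : ℝ, 0 ≤ a → 0 ≤ b → 0 ≤ c → StrongTriangleTriplet a b c →
        StrongTriangleTriplet (f a) (f b) (f c)) :=
  ⟨fun hUP _ _ _ ha hb hc => StrongTriangleTriplet.map_of_monotoneOn hUP.monotoneOn ha hb hc,
    hf.ultrametricPreserving⟩
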